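/- (Asymptotics of the rescaled potential.) Fix a real number v > 0 and γ ∈ (0,1), and for 0 < s < 1 set G(s;v) = (v/(1 − 2 log s))·(−log(v s²(1 − 2 log s)) + 1). Then G(s;v) − v = o((1 − 2 log s)^{−γ}) as s → 0+; that is, lim_{s→0+} (G(s;v) − v)·(1 − 2 log s)^{γ} = 0. -/

import Mathlib

open MeasureTheory Metric Filter Set
open scoped Topology NNReal ENNReal

noncomputable section

/-- ℝⁿ as Euclidean space. -/
abbrev En (n : ℕ) := EuclideanSpace ℝ (Fin n)

/-- `F(t) = t(1 - log t)` for `t > 0`, `0` otherwise. -/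
def Fpot (t : ℝ) : ℝ := if 0 < t then t * (1 - Real.log t) else 0

/-- The functional `𝒥₀(v; s) = ∫_s (|∇v|²/2 + F(v))`. -/
def J0 (n : ℕ) (v : En n → ℝ) (s : Set (En n)) : ℝ :=
  ∫ x in s, (‖gradient v x‖ ^ 2 / 2 + Fpot (v x))

/-- `u` is a nonnegative minimizer of `𝒥₀(·;Ω)` among nonnegative competitors
whose difference with `u` is compactly supported in `Ω`. -/
def IsMinimizer (n : ℕ) (u : En n → ℝ) (Ω : Set (En n)) : Prop :=
  (∀ x, 0 ≤ u x) ∧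
  ∀ v : En n → ℝ, (∀ x, 0 ≤ v x) →
    HasCompactSupport (fun x => v x - u x) →
    tsupport (fun x => v x - u x) ⊆ Ω →
    J0 n u Ω ≤ J0 n v Ω

/-- The free boundary `𝔉(u) = Ω ∩ ∂{u>0}`. -/
def FB (n : ℕ) (u : En n → ℝ) (Ω : Set (En n)) : Set (En n) :=
  Ω ∩ frontier {x | 0 < u x}

/-- `μ(r) = r²(1 - 2 log r)`. -/
def mus (r : ℝ) : ℝ := r ^ 2 * (1 - 2 * Real.log r)

/-- The rescaling `u_r(x) = u(x⁰ + r x) / μ(r)`. -/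
def ublow (n : ℕ) (u : En n → ℝ) (x0 : En n) (r : ℝ) : En n → ℝ :=
  fun x => u (x0 + r • x) / mus r

/-- The variable parameter `α(r) = 1 - 1/(2 log r)`. -/
def alp (r : ℝ) : ℝ := 1 - 1 / (2 * Real.log r)

/-- The Weiss adjusted boundary energy `W(r; u, x⁰)`. -/
def Weiss (n : ℕ) (u : En n → ℝ) (x0 : En n) (r : ℝ) : ℝ :=
  alp r * r ^ (-(n : ℝ) - 2) * (1 - 2 * Real.log r) ^ (-2 : ℤ) *
      (∫ x in ball x0 r, (‖gradient u x‖ ^ 2 / 2 + Fpot (u x)))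
    - r ^ (-(n : ℝ) - 3) * (1 - 2 * Real.log r) ^ (-2 : ℤ) *
      (∫ x in sphere x0 r, (u x) ^ 2 ∂(μH[(n : ℝ) - 1]))

/-- The half-space solution `h_ν(x) = (1/2) max(x·ν, 0)²`. -/
def hhalf (n : ℕ) (ν : En n) : En n → ℝ :=
  fun x => (1 / 2) * max (inner ℝ x ν : ℝ) 0 ^ 2

/-- `u₀` is a blow-up limit of `u` at `x⁰`: for some sequence `r_m → 0+`,
`u_{r_m} → u₀` weakly in `W^{1,2}_loc(ℝⁿ)`. -/
def BlowUpLimit (n : ℕ) (u : En n → ℝ) (x0 : En n) (u0 : En n → ℝ) : Prop :=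
  ∃ rm : ℕ → ℝ, Tendsto rm atTop (𝓝[>] (0 : ℝ)) ∧
    ∀ φ : En n → ℝ, ContDiff ℝ (⊤ : ℕ∞) φ → HasCompactSupport φ →
      Tendsto (fun m => ∫ x, (ublow n u x0 (rm m) x * φ x +
            (inner ℝ (gradient (ublow n u x0 (rm m)) x) (gradient φ x) : ℝ)))
        atTop (𝓝 (∫ x, (u0 x * φ x + (inner ℝ (gradient u0 x) (gradient φ x) : ℝ))))

/-- The regular set `ℛ_u`: free boundary points at which every blow-up limit is a
half-space solution. -/
def RegSet (n : ℕ) (u : En n → ℝ) (Ω : Set (En n)) : Set (En n) :=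
  {x0 | x0 ∈ FB n u Ω ∧
    ∀ u0, BlowUpLimit n u x0 u0 → ∃ ν : En n, ‖ν‖ = 1 ∧ u0 = hhalf n ν}

/-- Homogeneity of degree 2. -/
def Homog2 (n : ℕ) (v : En n → ℝ) : Prop :=
  ∀ lam : ℝ, 0 < lam → ∀ x, v (lam • x) = lam ^ 2 * v x

/-- `G(r;t)` : the rescaled potential, with value `0` for `t ≤ 0`. -/
def Gpot (r t : ℝ) : ℝ :=
  if 0 < t then (t / (1 - 2 * Real.log r)) *
    (-Real.log (t * r ^ 2 * (1 - 2 * Real.log r)) + 1) else 0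

/-- The balance energy `M(r;v)` with variable parameter. -/
def Mfun (n : ℕ) (r : ℝ) (v : En n → ℝ) : ℝ :=
  alp r * (∫ x in ball (0 : En n) 1, (‖gradient v x‖ ^ 2 / 2 + Gpot r (v x)))
    - ∫ x in sphere (0 : En n) 1, (v x) ^ 2 ∂(μH[(n : ℝ) - 1])

/-- The limiting balance energy `M₀(v)`. -/
def M0 (n : ℕ) (v : En n → ℝ) : ℝ :=
  (∫ x in ball (0 : En n) 1, (‖gradient v x‖ ^ 2 / 2 + v x))
    - ∫ x in sphere (0 : En n) 1, (v x) ^ 2 ∂(μH[(n : ℝ) - 1])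

/-- The integrable remainder `Q(r;u,x⁰)` in the Weiss-type monotonicity formula,
with logarithmic integrands set to `0` on `{u_r = 0}`. -/
def Qrem (n : ℕ) (u : En n → ℝ) (x0 : En n) (r : ℝ) : ℝ :=
  (2 * r * (Real.log r) ^ 2)⁻¹ *
    (∫ x in ball (0 : En n) 1,
      (‖gradient (ublow n u x0 r) x‖ ^ 2 / 2 +
        (if 0 < ublow n u x0 r x then
          (ublow n u x0 r x / (1 - 2 * Real.log r)) *
            (-Real.log (ublow n u x0 r x * r ^ 2 * (1 - 2 * Real.log r)) + 1)
         else 0)))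
  + (1 - (2 * Real.log r)⁻¹) *
    (∫ x in ball (0 : En n) 1,
      (if 0 < ublow n u x0 r x then
        (2 * ublow n u x0 r x / (r * (1 - 2 * Real.log r) ^ 2)) *
          (-Real.log (ublow n u x0 r x * (1 - 2 * Real.log r)) + 1)
       else 0))

/-- `Q̄(r;u,x⁰) = Q(r;u,x⁰) - (r (1 - 2 log r)^{1+γ})⁻¹`. -/
def Qbar (n : ℕ) (u : En n → ℝ) (x0 : En n) (γ r : ℝ) : ℝ :=
  Qrem n u x0 r - (r * (1 - 2 * Real.log r) ^ (1 + γ))⁻¹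

/-- `W̄(r;u,x⁰) = W(r;u,x⁰) - ∫₀^r Q̄(s;u,x⁰) ds`. -/
def Wbar (n : ℕ) (u : En n → ℝ) (x0 : En n) (γ r : ℝ) : ℝ :=
  Weiss n u x0 r - ∫ s in Set.Ioo (0 : ℝ) r, Qbar n u x0 γ s

/-- The `W^{1,2}(B₁)` norm. -/
def W12norm (n : ℕ) (w : En n → ℝ) : ℝ :=
  Real.sqrt (∫ x in ball (0 : En n) 1, ((w x) ^ 2 + ‖gradient w x‖ ^ 2))

/-- The 2-homogeneous replacement `𝒞_r(x) = |x|² u_r(x/|x|)`. -/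
def Crep (n : ℕ) (u : En n → ℝ) (x0 : En n) (r : ℝ) : En n → ℝ :=
  fun x => ‖x‖ ^ 2 * ublow n u x0 r (‖x‖⁻¹ • x)

/-- The Laplacian, as the trace of the second derivative. -/
def lap (n : ℕ) (u : En n → ℝ) (x : En n) : ℝ :=
  ∑ i : Fin n, fderiv ℝ (fun y => fderiv ℝ u y (EuclideanSpace.single i (1 : ℝ))) x
    (EuclideanSpace.single i (1 : ℝ))

/-- The energy density of half-space solutions: `ω_n/2 = H^{n-1}(∂B₁)/(8n(n+2))`. -/
def halfDensity (n : ℕ) : ℝ :=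
  (μH[(n : ℝ) - 1] (sphere (0 : En n) 1)).toReal / (8 * (n : ℝ) * ((n : ℝ) + 2))

/-- Weak solution of the classical obstacle problem `Δv = χ_{{v>0}}` in `ℝⁿ`. -/
def ObstacleSol (n : ℕ) (v : En n → ℝ) : Prop :=
  ∀ φ : En n → ℝ, ContDiff ℝ (⊤ : ℕ∞) φ → HasCompactSupport φ →
    (∫ x, (inner ℝ (gradient v x) (gradient φ x) : ℝ)) + (∫ x in {y | 0 < v y}, φ x) = 0

/-- `W^{1,2}(B₁)`-distance to the set `ℍ` of half-space solutions. -/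
def distH (n : ℕ) (w : En n → ℝ) : ℝ :=
  ⨅ ν : {ν : En n // ‖ν‖ = 1}, W12norm n (fun x => w x - hhalf n (ν : En n) x)

end

/-- asymptotics of the rescaled potential:
`G(s;v) - v = o((1 - 2 log s)^{-γ})` as `s → 0+`. -/
theorem rescaled_potential_asymptotics
    (v γ : ℝ) (hv : 0 < v) (hγ : γ ∈ Set.Ioo (0 : ℝ) 1) :
    Tendsto (fun s : ℝ => (Gpot s v - v) * (1 - 2 * Real.log s) ^ γ)
      (𝓝[>] (0 : ℝ)) (𝓝 0) := by
  obtain ⟨hγ0, hγ1⟩ := hγ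
  -- the auxiliary limit at infinity
  have h2 : Tendsto (fun t : ℝ => t ^ (γ - 1)) atTop (𝓝 0) := by
    have := tendsto_rpow_neg_atTop (y := 1 - γ) (by linarith)
    simpa [neg_sub] using this
  have h1 : Tendsto (fun t : ℝ => Real.log t * t ^ (γ - 1)) atTop (𝓝 0) := by
    have hlo := isLittleO_log_rpow_atTop (r := 1 - γ) (by linarith)
    have := hlo.tendsto_div_nhds_zero
    apply this.congr'
    filter_upwards [eventually_gt_atTop (0:ℝ)] with t ht
    rw [div_eq_mul_inv, ← Real.rpow_neg ht.le, neg_sub]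
  have hg : Tendsto (fun t : ℝ => -(v * (Real.log t + Real.log v)) * t ^ (γ - 1))
      atTop (𝓝 0) := by
    have h3 : Tendsto
        (fun t : ℝ => -v * (Real.log t * t ^ (γ-1)) + (-v * Real.log v) * t ^ (γ-1))
        atTop (𝓝 0) := by
      have := (h1.const_mul (-v)).add (h2.const_mul (-v * Real.log v))
      simpa using this
    exact h3.congr (fun t => by ring)
  -- L(s) = 1 - 2 log s tends to atTop as s → 0+
  have hL : Tendsto (fun s : ℝ => 1 - 2 * Real.log s) (𝓝[>] (0:ℝ)) atTop := by
    have := Real.tendsto_log_nhdsGT_zero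
    have h := tendsto_neg_atBot_atTop.comp (this.const_mul_atBot (two_pos))
    have h' := tendsto_atTop_add_const_left (𝓝[>] (0:ℝ)) 1 h
    apply h'.congr
    intro x; simp [Function.comp]; ring
  have hcomp := hg.comp hL
  apply hcomp.congr'
  filter_upwards [Ioo_mem_nhdsGT_of_mem (by constructor <;> norm_num :
      (0:ℝ) ∈ Set.Ico (0:ℝ) 1)] with s hs
  obtain ⟨hs0, hs1⟩ := hs
  have hlogs : Real.log s < 0 := Real.log_neg hs0 hs1
  set L : ℝ := 1 - 2 * Real.log s with hLdef
  have hL1 : 1 < L := by simp only [hLdef]; linarith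
  have hL0 : 0 < L := by linarith
  have hGpot : Gpot s v = (v / L) * (-Real.log (v * s ^ 2 * L) + 1) := by
    rw [Gpot, if_pos hv]
  have hlog : Real.log (v * s ^ 2 * L) = Real.log v + 2 * Real.log s + Real.log L := by
    rw [Real.log_mul (by positivity) (ne_of_gt hL0),
        Real.log_mul (ne_of_gt hv) (by positivity), Real.log_pow]
    push_cast; ring
  have hrs : L ^ (γ - 1) = L ^ γ / L := by
    rw [Real.rpow_sub hL0, Real.rpow_one]
  show -(v * (Real.log L + Real.log v)) * L ^ (γ - 1) = (Gpot s v - v) * L ^ γ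
  rw [hrs, hGpot, hlog]
  have h2ls : 2 * Real.log s = 1 - L := by rw [hLdef]; ring
  rw [h2ls]
  field_simp
  ring
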